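/- arXiv:1105.1242 — 4 statements merged into one kernel-verified Lean document; each statement's English description precedes it below -/
import Mathlib

section
/- Let f : [0,1] → [0,∞) satisfy f(p) = f(1−p) for all p ∈ [0,1], and suppose p ↦ f(p)/p is non-increasing on (0,1]. Let 0 ≤ p_1 ≤ p_2 ≤ … ≤ p_n ≤ 1 and let 1 ≤ θ ≤ n. Then the index i = n−θ+1 attains the minimum in the dynamic-programming recursion: for every j ∈ {1,…,n}, f(p_{n−θ+1}) + p_{n−θ+1}·C_f(θ−1; p_{−(n−θ+1)}) + (1−p_{n−θ+1})·C_f(θ; p_{−(n−θ+1)}) ≤ f(p_j) + p_j·C_f(θ−1; p_{−j}) + (1−p_j)·C_f(θ; p_{−j}). -/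
/-- The optimal expected cost `C_f(θ; p)` of sequentially computing the Boolean
threshold function `Π_θ` on independent Bernoulli variables with parameters given by
the list `p`, where querying a node with parameter `q` costs `f q`.
`cost f θ p = 0` if `θ = 0` or `θ > p.length`, and otherwise it is the minimum over
nodes `i` of `f p_i + p_i • cost f (θ-1) p_{-i} + (1 - p_i) • cost f θ p_{-i}`. -/
noncomputable def cost (f : ℝ → ℝ) : ℕ → List ℝ → ℝ
  | 0, _ => 0
  | (θ+1), p =>
      if p.length < θ + 1 then 0
      else ⨅ i : Fin p.length,
        (f (p.get i) + p.get i * cost f θ (p.eraseIdx i.1)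
          + (1 - p.get i) * cost f (θ+1) (p.eraseIdx i.1))
termination_by θ p => p.length
decreasing_by
  all_goals (have h := i.isLt; simp [List.length_eraseIdx, h]; omega)

/-!
Call *pivot strategy* for threshold `t + 1` on a sorted list of length `m` the strategy that
queries the entry at index `pv = m - (t + 1)` (the `(t + 1)`-st largest) and recurses on the
rest. By induction on the length, `cost` agrees with the pivot cost as soon as the pivot minimizes
the one-step recursion whose continuation costs are pivot costs. Complementing and reversing the
list swaps the two outcomes and turns threshold `θ` into `m + 1 - θ`, and `f` is symmetric, so it
suffices to compare the pivot with an entry `j < pv`.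

Let `F(L, t, j)` be the gap between querying `L[j]` first and querying the pivot first, and let
`a = L[pv]`, `b = L[j]`. Conditioning on both queries gives, for `t ≥ 1`,
`F(L, t, j) = a F(L \ pv, t - 1, j) + (1 - a) F(L \ pv, t, j) - b F(L \ j, t - 1, pv - 1)`.
For `j = pv - 1` this yields `F = (∏ of the entries above the pivot) * (a f(b) - b f(a))`, and for
general `j` an induction turns the same expression into a lower bound for `F`. It is nonnegative
because `f(x) / x` is non-increasing.
-/

namespace List
variable {α : Type*}

theorem eraseIdx_eraseIdx_of_lt (L : List α) {i j : ℕ} (h : i < j) :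
    (L.eraseIdx j).eraseIdx i = (L.eraseIdx i).eraseIdx (j - 1) := by
  induction L generalizing i j with
  | nil => simp
  | cons a L ih =>
    obtain ⟨j, rfl⟩ : ∃ j', j = j' + 1 := ⟨j - 1, by omega⟩
    cases i with
    | zero => simp
    | succ i =>
      obtain ⟨j, rfl⟩ : ∃ j', j = j' + 1 := ⟨j - 1, by omega⟩
      simp [ih (by omega : i < j + 1)]

theorem getD_eraseIdx_of_lt (L : List α) (d : α) {i k : ℕ} (h : k < i) :
    (L.eraseIdx i).getD k d = L.getD k d := by
  simp only [getD_eq_getElem?_getD, getElem?_eraseIdx_of_lt h]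

theorem getD_eraseIdx_of_ge (L : List α) (d : α) {i k : ℕ} (h : i ≤ k) :
    (L.eraseIdx i).getD k d = L.getD (k + 1) d := by
  simp only [getD_eq_getElem?_getD, getElem?_eraseIdx_of_ge h]

theorem drop_eraseIdx_of_le (L : List α) {i k : ℕ} (h : i ≤ k) :
    (L.eraseIdx i).drop k = L.drop (k + 1) := by
  ext n : 1
  simp only [getElem?_drop, getElem?_eraseIdx_of_ge (by omega : i ≤ k + n)]
  congr 1; omega

theorem eraseIdx_reverse (L : List α) {k : ℕ} (hk : k < L.length) :
    L.reverse.eraseIdx k = (L.eraseIdx (L.length - 1 - k)).reverse := by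
  ext n : 1
  grind

theorem SortedLE.eraseIdx [Preorder α] {L : List α} (h : L.SortedLE) (k : ℕ) :
    (L.eraseIdx k).SortedLE :=
  (h.pairwise.sublist (eraseIdx_sublist L k)).sortedLE

end List

namespace Threshold

open Set

variable (f : ℝ → ℝ)

noncomputable def pivotCost : ℕ → List ℝ → ℝ
  | 0, _ => 0
  | t + 1, L =>
      if L.length < t + 1 then 0
      else
        f (L.getD (L.length - (t + 1)) 0)
          + L.getD (L.length - (t + 1)) 0 * pivotCost t (L.eraseIdx (L.length - (t + 1)))
          + (1 - L.getD (L.length - (t + 1)) 0)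
            * pivotCost (t + 1) (L.eraseIdx (L.length - (t + 1)))
termination_by _ L => L.length
decreasing_by all_goals (rw [List.length_eraseIdx]; split <;> omega)

/-- Expected cost, for threshold `t + 1`, of querying `L[k]` first and continuing at cost `C`. -/
noncomputable def queryFirst (C : ℕ → List ℝ → ℝ) (t : ℕ) (L : List ℝ) (k : ℕ) : ℝ :=
  f (L.getD k 0) + L.getD k 0 * C t (L.eraseIdx k) + (1 - L.getD k 0) * C (t + 1) (L.eraseIdx k)

noncomputable def pivotGap (t : ℕ) (L : List ℝ) (j : ℕ) : ℝ :=
  queryFirst f (pivotCost f) t L j - pivotCost f (t + 1) L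

def ratioGap (x y : ℝ) : ℝ := y * f x - x * f y

def dual (L : List ℝ) : List ℝ := (L.map (1 - ·)).reverse

variable {f}

theorem cost_zero (L : List ℝ) : cost f 0 L = 0 := by rw [cost]

theorem cost_of_lt {θ : ℕ} {L : List ℝ} (h : L.length < θ) : cost f θ L = 0 := by
  cases θ with
  | zero => exact cost_zero L
  | succ t => rw [cost, if_pos h]

theorem cost_succ {t : ℕ} {L : List ℝ} (h : t + 1 ≤ L.length) :
    cost f (t + 1) L = ⨅ i : Fin L.length, queryFirst f (cost f) t L i := by
  rw [cost, if_neg (by omega)]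
  congr! with i
  simp only [queryFirst, List.getD_eq_getElem _ _ i.2, List.get_eq_getElem]

theorem pivotCost_zero (L : List ℝ) : pivotCost f 0 L = 0 := by rw [pivotCost]

theorem pivotCost_of_lt {θ : ℕ} {L : List ℝ} (h : L.length < θ) : pivotCost f θ L = 0 := by
  cases θ with
  | zero => exact pivotCost_zero L
  | succ t => rw [pivotCost, if_pos h]

theorem pivotCost_succ {t pv : ℕ} {L : List ℝ} (h : L.length = pv + t + 1) :
    pivotCost f (t + 1) L = queryFirst f (pivotCost f) t L pv := by
  rw [pivotCost, if_neg (by omega), queryFirst, show L.length - (t + 1) = pv by omega]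

theorem pivotGap_pivot {t pv : ℕ} {L : List ℝ} (h : L.length = pv + t + 1) :
    pivotGap f t L pv = 0 := by
  rw [pivotGap, pivotCost_succ h, sub_self]

theorem length_dual (L : List ℝ) : (dual L).length = L.length := by simp [dual]

theorem mem_dual_Icc {L : List ℝ} (hL : ∀ x ∈ L, x ∈ Icc (0 : ℝ) 1) :
    ∀ x ∈ dual L, x ∈ Icc (0 : ℝ) 1 := by
  simp only [dual, List.mem_reverse, List.mem_map, forall_exists_index, and_imp,
    forall_apply_eq_imp_iff₂, mem_Icc, sub_nonneg, sub_le_self_iff]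
  exact fun x hx => (hL x hx).symm

theorem sortedLE_dual {L : List ℝ} (hS : L.SortedLE) : (dual L).SortedLE := by
  rw [dual, List.sortedLE_reverse, List.sortedGE_iff_pairwise, List.pairwise_map]
  exact hS.pairwise.imp fun h => by linarith

theorem getD_dual {L : List ℝ} {k : ℕ} (hk : k < L.length) :
    (dual L).getD (L.length - 1 - k) 0 = 1 - L.getD k 0 := by
  grind [dual]

theorem eraseIdx_dual {L : List ℝ} {k : ℕ} (hk : k < L.length) :
    (dual L).eraseIdx (L.length - 1 - k) = dual (L.eraseIdx k) := by
  rw [dual, List.eraseIdx_reverse _ (by simp; omega), List.eraseIdx_map]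
  simp only [List.length_map]
  congr 3
  omega

theorem getD_mem_Icc {L : List ℝ} (hL : ∀ x ∈ L, x ∈ Icc (0 : ℝ) 1) {k : ℕ} (hk : k < L.length) :
    L.getD k 0 ∈ Icc (0 : ℝ) 1 :=
  hL _ (List.getD_eq_getElem _ _ hk ▸ List.getElem_mem hk)

theorem queryFirst_dual (hf_sym : ∀ x ∈ Icc (0 : ℝ) 1, f x = f (1 - x))
    {C : ℕ → List ℝ → ℝ} {L : List ℝ} (hL : ∀ x ∈ L, x ∈ Icc (0 : ℝ) 1)
    {s t k : ℕ} (hst : s + t + 1 = L.length) (hk : k < L.length)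
    (hC : ∀ θ θ', θ + θ' = L.length → C θ (L.eraseIdx k) = C θ' (dual (L.eraseIdx k))) :
    queryFirst f C t L k = queryFirst f C s (dual L) (L.length - 1 - k) := by
  rw [queryFirst, queryFirst, getD_dual hk, eraseIdx_dual hk, hC t (s + 1) (by omega),
    hC (t + 1) s (by omega), hf_sym _ (getD_mem_Icc hL hk)]
  ring

theorem pivotCost_dual (hf_sym : ∀ x ∈ Icc (0 : ℝ) 1, f x = f (1 - x))
    {L : List ℝ} (hL : ∀ x ∈ L, x ∈ Icc (0 : ℝ) 1) {θ θ' : ℕ} (h : θ + θ' = L.length + 1) :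
    pivotCost f θ L = pivotCost f θ' (dual L) :=
  match θ, θ', h with
  | 0, _, h => by rw [pivotCost_zero, pivotCost_of_lt (by rw [length_dual]; omega)]
  | _, 0, h => by rw [pivotCost_zero, pivotCost_of_lt (by omega)]
  | t + 1, s + 1, h => by
    have hk : L.length - (t + 1) < L.length := by omega
    rw [pivotCost_succ (pv := L.length - (t + 1)) (by omega),
      pivotCost_succ (pv := L.length - 1 - (L.length - (t + 1))) (by rw [length_dual]; omega)]
    refine queryFirst_dual hf_sym hL (by omega) hk fun θ θ' h => ?_
    exact pivotCost_dual hf_sym (fun x hx => hL x (List.mem_of_mem_eraseIdx hx))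
      (by rw [List.length_eraseIdx_of_lt hk]; omega)
termination_by L.length
decreasing_by rw [List.length_eraseIdx_of_lt hk]; omega

theorem pivotGap_dual (hf_sym : ∀ x ∈ Icc (0 : ℝ) 1, f x = f (1 - x))
    {L : List ℝ} (hL : ∀ x ∈ L, x ∈ Icc (0 : ℝ) 1) {s t k : ℕ} (hst : s + t + 1 = L.length)
    (hk : k < L.length) :
    pivotGap f t L k = pivotGap f s (dual L) (L.length - 1 - k) := by
  have hC θ θ' (h : θ + θ' = L.length) :
      pivotCost f θ (L.eraseIdx k) = pivotCost f θ' (dual (L.eraseIdx k)) :=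
    pivotCost_dual hf_sym (fun x hx => hL x (List.mem_of_mem_eraseIdx hx))
      (by rw [List.length_eraseIdx_of_lt hk]; omega)
  rw [pivotGap, pivotGap, queryFirst_dual hf_sym hL hst hk hC,
    pivotCost_dual hf_sym hL (θ' := s + 1) (by omega)]

theorem pivotGap_zero_eq {L : List ℝ} {pv j : ℕ} (hlen : L.length = pv + 1) (hj : j < pv) :
    pivotGap f 0 L j = ratioGap f (L.getD j 0) (L.getD pv 0)
      + (1 - L.getD pv 0) * pivotGap f 0 (L.eraseIdx pv) j := by
  have hlenj : (L.eraseIdx j).length = pv - 1 + 0 + 1 := by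
    rw [List.length_eraseIdx_of_lt (by omega)]; omega
  have hpiv := pivotCost_succ (f := f) (t := 0) (pv := pv) (by omega)
  have hpivj := pivotCost_succ (f := f) (t := 0) (pv := pv - 1) hlenj
  simp only [pivotGap, hpiv, hpivj, queryFirst, ratioGap, pivotCost_zero,
    List.getD_eraseIdx_of_lt _ _ hj, List.getD_eraseIdx_of_ge _ _ (by omega : j ≤ pv - 1),
    Nat.sub_add_cancel (by omega : 1 ≤ pv), List.eraseIdx_eraseIdx_of_lt _ hj]
  ring

theorem pivotGap_succ_eq {L : List ℝ} {t pv j : ℕ} (hlen : L.length = pv + t + 2) (hj : j < pv) :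
    pivotGap f (t + 1) L j = L.getD pv 0 * pivotGap f t (L.eraseIdx pv) j
      + (1 - L.getD pv 0) * pivotGap f (t + 1) (L.eraseIdx pv) j
      - L.getD j 0 * pivotGap f t (L.eraseIdx j) (pv - 1) := by
  have hlenj : (L.eraseIdx j).length = pv - 1 + (t + 1) + 1 := by
    rw [List.length_eraseIdx_of_lt (by omega)]; omega
  have hpiv := pivotCost_succ (f := f) (t := t + 1) (pv := pv) (by omega)
  have hpivj := pivotCost_succ (f := f) (t := t + 1) (pv := pv - 1) hlenj
  simp only [pivotGap, hpiv, hpivj, queryFirst,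
    List.getD_eraseIdx_of_lt _ _ hj, List.getD_eraseIdx_of_ge _ _ (by omega : j ≤ pv - 1),
    Nat.sub_add_cancel (by omega : 1 ≤ pv), List.eraseIdx_eraseIdx_of_lt _ hj]
  ring

theorem pivotGap_pred_pivot {t j : ℕ} {L : List ℝ} (hlen : L.length = j + t + 2) :
    pivotGap f t L j = (L.drop (j + 2)).prod * ratioGap f (L.getD j 0) (L.getD (j + 1) 0) := by
  induction t generalizing L j with
  | zero =>
    rw [pivotGap_zero_eq (pv := j + 1) (by omega) (by omega),
      pivotGap_pivot (t := 0) (by rw [List.length_eraseIdx_of_lt (by omega)]; omega),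
      List.drop_eq_nil_of_le (by omega)]
    simp
  | succ s ih =>
    have hlen' : (L.eraseIdx j).length = j + s + 2 := by
      rw [List.length_eraseIdx_of_lt (by omega)]; omega
    have hlen'' : (L.eraseIdx (j + 1)).length = j + s + 2 := by
      rw [List.length_eraseIdx_of_lt (by omega)]; omega
    rw [pivotGap_succ_eq (pv := j + 1) (by omega) (by omega), Nat.add_sub_cancel,
      ih hlen', ih hlen'', pivotGap_pivot (t := s + 1) (by omega),
      List.drop_eraseIdx_of_le _ (by omega), List.drop_eraseIdx_of_le _ (by omega),
      List.drop_eq_getElem_cons (i := j + 2) (l := L) (by omega)]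
    simp only [List.getD_eraseIdx_of_lt _ _ (by omega : j < j + 1),
      List.getD_eraseIdx_of_ge _ _ (le_refl _), List.getD_eraseIdx_of_ge _ _ (by omega : j ≤ j + 1),
      List.getD_eq_getElem _ _ (by omega : j + 2 < L.length), List.prod_cons, ratioGap]
    ring

theorem ratioGap_nonneg (hf_nonneg : ∀ x ∈ Icc (0 : ℝ) 1, 0 ≤ f x)
    (hf_mono : AntitoneOn (fun x => f x / x) (Ioc (0 : ℝ) 1)) {x y : ℝ}
    (hx : 0 ≤ x) (hxy : x ≤ y) (hy : y ≤ 1) : 0 ≤ ratioGap f x y := by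
  rw [ratioGap, sub_nonneg]
  rcases hx.eq_or_lt with rfl | hx
  · simpa using mul_nonneg (hx.trans hxy) (hf_nonneg 0 ⟨le_rfl, hxy.trans hy⟩)
  · have := hf_mono ⟨hx, hxy.trans hy⟩ ⟨hx.trans_le hxy, hy⟩ hxy
    rw [div_le_div_iff₀ (hx.trans_le hxy) hx] at this
    linarith

theorem ratioGap_getD_nonneg (hf_nonneg : ∀ x ∈ Icc (0 : ℝ) 1, 0 ≤ f x)
    (hf_mono : AntitoneOn (fun x => f x / x) (Ioc (0 : ℝ) 1)) {L : List ℝ} (hS : L.SortedLE)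
    (hL : ∀ x ∈ L, x ∈ Icc (0 : ℝ) 1) {i j : ℕ} (hij : i ≤ j) (hj : j < L.length) :
    0 ≤ ratioGap f (L.getD i 0) (L.getD j 0) := by
  refine ratioGap_nonneg hf_nonneg hf_mono (getD_mem_Icc hL (by omega)).1 ?_ (getD_mem_Icc hL hj).2
  rw [List.getD_eq_getElem _ _ (by omega), List.getD_eq_getElem _ _ hj]
  exact hS.getElem_le_getElem_of_le hij

theorem prod_drop_nonneg {L : List ℝ} (hL : ∀ x ∈ L, x ∈ Icc (0 : ℝ) 1) (k : ℕ) :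
    0 ≤ (L.drop k).prod :=
  List.prod_nonneg fun x hx => (hL x (List.mem_of_mem_drop hx)).1

theorem le_pivotGap (hf_nonneg : ∀ x ∈ Icc (0 : ℝ) 1, 0 ≤ f x)
    (hf_mono : AntitoneOn (fun x => f x / x) (Ioc (0 : ℝ) 1)) {L : List ℝ} (hS : L.SortedLE)
    (hL : ∀ x ∈ L, x ∈ Icc (0 : ℝ) 1) {t pv j : ℕ} (hlen : L.length = pv + t + 1) (hj : j ≤ pv) :
    (L.drop (pv + 1)).prod * ratioGap f (L.getD j 0) (L.getD pv 0) ≤ pivotGap f t L j := by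
  induction hn : L.length generalizing L t pv j with
  | zero => omega
  | succ n ih =>
    rcases hj.eq_or_lt with rfl | hj
    · simp [pivotGap_pivot hlen, ratioGap]
    have hS' := hS.eraseIdx pv
    have hL' : ∀ x ∈ L.eraseIdx pv, x ∈ Icc (0 : ℝ) 1 :=
      fun x hx => hL x (List.mem_of_mem_eraseIdx hx)
    have hlen' : (L.eraseIdx pv).length = n := by rw [List.length_eraseIdx_of_lt (by omega)]; omega
    have ha := getD_mem_Icc hL (k := pv) (by omega)
    have hgap_nonneg : 0 ≤ pivotGap f t (L.eraseIdx pv) j :=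
      (mul_nonneg (prod_drop_nonneg hL' _)
        (ratioGap_getD_nonneg hf_nonneg hf_mono hS' hL' (by omega) (by omega))).trans
        (ih hS' hL' (pv := pv - 1) (by omega) (by omega) hlen')
    cases t with
    | zero =>
      rw [pivotGap_zero_eq hlen hj, List.drop_eq_nil_of_le (by omega), List.prod_nil, one_mul]
      exact le_add_of_nonneg_right (mul_nonneg (sub_nonneg.2 ha.2) hgap_nonneg)
    | succ s =>
      have h1 := ih hS' hL' (pv := pv) (t := s) (by omega) hj.le hlen'
      have h3 := pivotGap_pred_pivot (f := f) (L := L.eraseIdx j) (j := pv - 1) (t := s)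
        (by rw [List.length_eraseIdx_of_lt (by omega)]; omega)
      rw [List.drop_eraseIdx_of_le _ (by omega : pv ≤ pv + 1), List.getD_eraseIdx_of_lt _ _ hj,
        List.getD_eraseIdx_of_ge _ _ le_rfl] at h1
      rw [Nat.sub_add_cancel (by omega : 1 ≤ pv), List.drop_eraseIdx_of_le _ (by omega),
        List.getD_eraseIdx_of_ge _ _ (by omega), List.getD_eraseIdx_of_ge _ _ (by omega),
        Nat.sub_add_cancel (by omega : 1 ≤ pv)] at h3
      rw [pivotGap_succ_eq (by omega) hj, h3, show pv - 1 + 2 + 1 = pv + 2 by omega,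
        List.drop_eq_getElem_cons (i := pv + 1) (l := L) (by omega), List.prod_cons,
        ← List.getD_eq_getElem L 0]
      calc L.getD (pv + 1) 0 * (L.drop (pv + 2)).prod * ratioGap f (L.getD j 0) (L.getD pv 0)
          = L.getD pv 0 * ((L.drop (pv + 2)).prod * ratioGap f (L.getD j 0) (L.getD (pv + 1) 0))
            - L.getD j 0 * ((L.drop (pv + 2)).prod
              * ratioGap f (L.getD pv 0) (L.getD (pv + 1) 0)) := by
            simp only [ratioGap]; ring
        _ ≤ _ := by
            linarith [mul_le_mul_of_nonneg_left h1 ha.1,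
              mul_nonneg (sub_nonneg.2 ha.2) hgap_nonneg]

theorem pivotGap_nonneg (hf_nonneg : ∀ x ∈ Icc (0 : ℝ) 1, 0 ≤ f x)
    (hf_sym : ∀ x ∈ Icc (0 : ℝ) 1, f x = f (1 - x))
    (hf_mono : AntitoneOn (fun x => f x / x) (Ioc (0 : ℝ) 1)) {L : List ℝ} (hS : L.SortedLE)
    (hL : ∀ x ∈ L, x ∈ Icc (0 : ℝ) 1) {t k : ℕ} (ht : t + 1 ≤ L.length) (hk : k < L.length) :
    0 ≤ pivotGap f t L k := by
  have below {M : List ℝ} (hS : M.SortedLE) (hM : ∀ x ∈ M, x ∈ Icc (0 : ℝ) 1) {t pv j : ℕ}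
      (hlen : M.length = pv + t + 1) (hj : j ≤ pv) : 0 ≤ pivotGap f t M j :=
    (mul_nonneg (prod_drop_nonneg hM _)
      (ratioGap_getD_nonneg hf_nonneg hf_mono hS hM hj (by omega))).trans
      (le_pivotGap hf_nonneg hf_mono hS hM hlen hj)
  rcases le_or_gt k (L.length - (t + 1)) with hk' | hk'
  · exact below hS hL (by omega) hk'
  · rw [pivotGap_dual hf_sym hL (s := L.length - (t + 1)) (by omega) hk]
    exact below (sortedLE_dual hS) (mem_dual_Icc hL) (pv := t) (by rw [length_dual]; omega)
      (by omega)

theorem cost_eq_pivotCost (hf_nonneg : ∀ x ∈ Icc (0 : ℝ) 1, 0 ≤ f x)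
    (hf_sym : ∀ x ∈ Icc (0 : ℝ) 1, f x = f (1 - x))
    (hf_mono : AntitoneOn (fun x => f x / x) (Ioc (0 : ℝ) 1)) {L : List ℝ} (hS : L.SortedLE)
    (hL : ∀ x ∈ L, x ∈ Icc (0 : ℝ) 1) (θ : ℕ) : cost f θ L = pivotCost f θ L :=
  match θ with
  | 0 => by rw [cost_zero, pivotCost_zero]
  | t + 1 => by
    rcases lt_or_ge L.length (t + 1) with h | h
    · rw [cost_of_lt h, pivotCost_of_lt h]
    have hfirst (i : Fin L.length) :
        queryFirst f (cost f) t L i = queryFirst f (pivotCost f) t L i := by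
      simp only [queryFirst, cost_eq_pivotCost hf_nonneg hf_sym hf_mono (hS.eraseIdx i)
        (fun x hx => hL x (List.mem_of_mem_eraseIdx hx))]
    have hpiv := pivotCost_succ (f := f) (L := L) (t := t) (pv := L.length - (t + 1)) (by omega)
    rw [cost_succ h, hpiv]
    simp only [hfirst]
    have : Nonempty (Fin L.length) := ⟨⟨0, by omega⟩⟩
    refine le_antisymm (ciInf_le (Set.finite_range _).bddBelow (⟨_, by omega⟩ : Fin L.length))
      (le_ciInf fun i => ?_)
    rw [← sub_nonneg, ← hpiv]
    exact pivotGap_nonneg hf_nonneg hf_sym hf_mono hS hL h i.2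
termination_by L.length
decreasing_by rw [List.length_eraseIdx_of_lt i.2]; omega

end Threshold

open Threshold

/-- Lemma 1 (main DP lemma): for a symmetric cost `f` with `f(p)/p` non-increasing on
`(0,1]`, and sorted probabilities `p_1 ≤ … ≤ p_n`, the index `n - θ + 1` (1-based),
i.e. the 0-based index `n - θ`, attains the minimum in the dynamic-programming
recursion for `C_f(θ; p_1, …, p_n)`. -/
theorem stmt_0 (f : ℝ → ℝ)
    (hf_nonneg : ∀ x ∈ Set.Icc (0:ℝ) 1, 0 ≤ f x)
    (hf_sym : ∀ x ∈ Set.Icc (0:ℝ) 1, f x = f (1 - x))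
    (hf_mono : AntitoneOn (fun x => f x / x) (Set.Ioc (0:ℝ) 1))
    (n : ℕ) (p : Fin n → ℝ)
    (hp0 : ∀ i, 0 ≤ p i) (hp1 : ∀ i, p i ≤ 1) (hsorted : Monotone p)
    (θ : ℕ) (hθ1 : 1 ≤ θ) (hθn : θ ≤ n) (j : Fin n) :
    f (p ⟨n - θ, by omega⟩)
      + p ⟨n - θ, by omega⟩ * cost f (θ - 1) ((List.ofFn p).eraseIdx (n - θ))
      + (1 - p ⟨n - θ, by omega⟩) * cost f θ ((List.ofFn p).eraseIdx (n - θ))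
    ≤ f (p j) + p j * cost f (θ - 1) ((List.ofFn p).eraseIdx j)
      + (1 - p j) * cost f θ ((List.ofFn p).eraseIdx j) := by
  obtain ⟨t, rfl⟩ : ∃ t, θ = t + 1 := ⟨θ - 1, by omega⟩
  have hS : (List.ofFn p).SortedLE := hsorted.sortedLE_ofFn
  have hL : ∀ x ∈ List.ofFn p, x ∈ Set.Icc (0 : ℝ) 1 := by
    simpa [List.mem_ofFn] using fun i => ⟨hp0 i, hp1 i⟩
  have hlen : (List.ofFn p).length = n - (t + 1) + t + 1 := by
    rw [List.length_ofFn]; omega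
  have hfirst (k : ℕ) (hk : k < n) : f (p ⟨k, hk⟩)
      + p ⟨k, hk⟩ * cost f t ((List.ofFn p).eraseIdx k)
      + (1 - p ⟨k, hk⟩) * cost f (t + 1) ((List.ofFn p).eraseIdx k)
      = queryFirst f (pivotCost f) t (List.ofFn p) k := by
    have hpk : p ⟨k, hk⟩ = (List.ofFn p).getD k 0 := by simp [List.getD_eq_getElem?_getD, hk]
    simp only [hpk, queryFirst, cost_eq_pivotCost hf_nonneg hf_sym hf_mono (hS.eraseIdx k)
      (fun x hx => hL x (List.mem_of_mem_eraseIdx hx))]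
  rw [Nat.add_sub_cancel, hfirst, hfirst, ← pivotCost_succ hlen, ← sub_nonneg]
  exact pivotGap_nonneg hf_nonneg hf_sym hf_mono hS hL (by omega) (by simp)
end

section
/- Let f : [0,1] → [0,∞) satisfy f(p) = f(1−p) for all p ∈ [0,1], with p ↦ f(p)/p non-increasing on (0,1]. Let 0 ≤ p_1 ≤ … ≤ p_m ≤ 1, let 0 ≤ k ≤ m−2 and k+2 ≤ i ≤ m. Then (p_{k+1} − p_i)·C_f(m−k−1; p_{−(k+1,i)}) + (1−p_{k+1})·C_f(m−k; p_{−(k+1)}) − (1−p_i)·C_f(m−k; p_{−i}) ≤ (1−p_{k+1})·f(p_i) − (1−p_i)·f(p_{k+1}), where p_{−(k+1,i)} denotes the list with both entries k+1 and i removed. -/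
/-!
For a sorted list `l` of length `n` one proves, by a simultaneous induction on `n`, that
(A) querying the `θ`-th largest element first is optimal for `cost f θ l`, and
(B) the exchange bound `ExchangeBound` for every pair `a < b` with `θ + a = n`.

For `a ≥ 1`, expanding every cost in (B) at the element `l[a-1]`, which is an optimal first
query by (A) for shorter lists, writes (B) as a convex combination, with weights `l[a-1]` and
`1 - l[a-1]`, of (B) for `l.eraseIdx (a-1)` and of a companion bound at threshold `θ - 1`; the
latter holds because querying `l[b]` first after removing `l[a]` makes it an identity. For
`a = 0` every cost vanishes, and (B) reduces to `(1 - y) f x ≤ (1 - x) f y` for `x ≤ y`, which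
is where the symmetry of `f` and the monotonicity of `f p / p` enter.

Conversely (B) shows that the element of rank `θ` is a better first query than any larger
element. The smaller ones are handled by the substitution `p ↦ 1 - p`, which reverses the
order of the list and exchanges `Π_θ` with the negation of `Π_{n+1-θ}`.
-/

open Set

namespace List

variable {α : Type*}

theorem lt_length_eraseIdx (l : List α) (i : ℕ) {j : ℕ} (hj : j + 1 < l.length) :
    j < (l.eraseIdx i).length := by
  have := l.le_length_eraseIdx i
  omega

theorem eraseIdx_eraseIdx_of_le (l : List α) {i j : ℕ} (h : i ≤ j) :
    (l.eraseIdx (j + 1)).eraseIdx i = (l.eraseIdx i).eraseIdx j := by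
  apply List.ext_getElem
  · simp only [List.length_eraseIdx]
    split_ifs <;> omega
  · intro n h₁ h₂
    simp only [List.getElem_eraseIdx]
    split_ifs <;> first | rfl | omega

theorem reverse_eraseIdx (l : List α) {i : ℕ} (hi : i < l.length) :
    (l.eraseIdx i).reverse = l.reverse.eraseIdx (l.length - 1 - i) := by
  rw [eraseIdx_eq_take_drop_succ, eraseIdx_eq_take_drop_succ, take_reverse, drop_reverse,
    reverse_append]
  congr 2 <;> congr 1 <;> omega

end List

def complReverse (l : List ℝ) : List ℝ := (l.map (1 - ·)).reverse

@[simp]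
theorem length_complReverse (l : List ℝ) : (complReverse l).length = l.length := by
  simp [complReverse]

theorem getElem_complReverse (l : List ℝ) {i : ℕ} (hi : i < l.length) :
    (complReverse l)[l.length - 1 - i]'(by simp; omega) = 1 - l[i] := by
  simp only [complReverse, List.getElem_reverse, List.getElem_map, List.length_map]
  congr
  omega

theorem complReverse_eraseIdx (l : List ℝ) {i : ℕ} (hi : i < l.length) :
    complReverse (l.eraseIdx i) = (complReverse l).eraseIdx (l.length - 1 - i) := by
  rw [complReverse, ← List.eraseIdx_map, List.reverse_eraseIdx _ (by simpa using hi),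
    List.length_map, complReverse]

def SortedProbs (l : List ℝ) : Prop :=
  l.Pairwise (· ≤ ·) ∧ ∀ x ∈ l, x ∈ Icc (0 : ℝ) 1

namespace SortedProbs

variable {l : List ℝ}

theorem eraseIdx (h : SortedProbs l) (i : ℕ) : SortedProbs (l.eraseIdx i) :=
  ⟨h.1.sublist (l.eraseIdx_sublist i), fun x hx => h.2 x ((l.eraseIdx_sublist i).subset hx)⟩

theorem complReverse (h : SortedProbs l) : SortedProbs (complReverse l) := by
  refine ⟨?_, ?_⟩
  · simp only [_root_.complReverse, List.pairwise_reverse, List.pairwise_map]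
    exact h.1.imp fun hxy => by linarith
  · simp only [_root_.complReverse, List.mem_reverse, List.mem_map]
    rintro _ ⟨x, hx, rfl⟩
    have := h.2 x hx
    constructor <;> linarith [this.1, this.2]

theorem getElem_mem (h : SortedProbs l) {i : ℕ} (hi : i < l.length) : l[i] ∈ Icc (0 : ℝ) 1 :=
  h.2 _ (l.getElem_mem hi)

theorem getElem_le (h : SortedProbs l) {i j : ℕ} (hij : i ≤ j) (hj : j < l.length) :
    l[i] ≤ l[j] := by
  rcases hij.eq_or_lt with rfl | hlt
  · rfl
  · exact List.pairwise_iff_getElem.mp h.1 i j _ hj hlt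

end SortedProbs

noncomputable def queryCost (f : ℝ → ℝ) (θ : ℕ) (l : List ℝ) (j : ℕ) (hj : j < l.length) : ℝ :=
  f l[j] + l[j] * cost f (θ - 1) (l.eraseIdx j) + (1 - l[j]) * cost f θ (l.eraseIdx j)

section Cost

variable {f : ℝ → ℝ} {θ : ℕ} {l : List ℝ}

theorem cost_zero_left (f : ℝ → ℝ) (l : List ℝ) : cost f 0 l = 0 := by
  rw [cost]

theorem cost_of_length_lt (h : l.length < θ) : cost f θ l = 0 := by
  obtain ⟨θ, rfl⟩ : ∃ θ', θ = θ' + 1 := ⟨θ - 1, by omega⟩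
  rw [cost, if_pos h]

theorem cost_eq_iInf (hθ : 1 ≤ θ) (hl : θ ≤ l.length) :
    cost f θ l = ⨅ j : Fin l.length, queryCost f θ l j j.isLt := by
  obtain ⟨θ, rfl⟩ : ∃ θ', θ = θ' + 1 := ⟨θ - 1, by omega⟩
  rw [cost, if_neg (by omega)]
  rfl

theorem cost_le_queryCost (hθ : 1 ≤ θ) (hl : θ ≤ l.length) {j : ℕ} (hj : j < l.length) :
    cost f θ l ≤ queryCost f θ l j hj := by
  rw [cost_eq_iInf hθ hl]
  exact ciInf_le (Set.finite_range _).bddBelow (⟨j, hj⟩ : Fin l.length)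

theorem cost_eq_queryCost_of_forall_le (hθ : 1 ≤ θ) (hl : θ ≤ l.length) {c : ℕ}
    (hc : c < l.length)
    (h : ∀ j (hj : j < l.length), queryCost f θ l c hc ≤ queryCost f θ l j hj) :
    cost f θ l = queryCost f θ l c hc := by
  refine le_antisymm (cost_le_queryCost hθ hl hc) ?_
  rw [cost_eq_iInf hθ hl]
  have : Nonempty (Fin l.length) := ⟨⟨c, hc⟩⟩
  exact le_ciInf fun j => h j j.isLt

theorem queryCost_complReverse (hf_sym : ∀ x ∈ Icc (0 : ℝ) 1, f x = f (1 - x))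
    (hl : ∀ x ∈ l, x ∈ Icc (0 : ℝ) 1) {j : ℕ} (hθ : 1 ≤ θ) (hj : j < l.length)
    (hdual : ∀ τ, cost f τ (complReverse (l.eraseIdx j))
      = cost f ((l.eraseIdx j).length + 1 - τ) (l.eraseIdx j)) :
    queryCost f θ (complReverse l) (l.length - 1 - j) (by simp; omega)
      = queryCost f (l.length + 1 - θ) l j hj := by
  have hlen : (l.eraseIdx j).length + 1 = l.length := List.length_eraseIdx_add_one hj
  simp only [queryCost]
  rw [getElem_complReverse l hj, ← hf_sym _ (hl _ (l.getElem_mem hj)),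
    ← complReverse_eraseIdx l hj, hdual, hdual, hlen,
    show l.length - (θ - 1) = l.length + 1 - θ by omega,
    show l.length - θ = l.length + 1 - θ - 1 by omega]
  ring

theorem cost_complReverse (hf_sym : ∀ x ∈ Icc (0 : ℝ) 1, f x = f (1 - x)) (l : List ℝ)
    (hl : ∀ x ∈ l, x ∈ Icc (0 : ℝ) 1) (θ : ℕ) :
    cost f θ (complReverse l) = cost f (l.length + 1 - θ) l := by
  rcases Nat.eq_zero_or_pos θ with rfl | hθ
  · rw [cost_zero_left, cost_of_length_lt (by omega)]
  rcases lt_or_ge l.length θ with hθl | hθl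
  · rw [cost_of_length_lt (by simpa using hθl), show l.length + 1 - θ = 0 by omega,
      cost_zero_left]
  rw [cost_eq_iInf hθ (by simpa using hθl), cost_eq_iInf (by omega) (by omega)]
  refine (Function.Surjective.iInf_congr
    (fun j : Fin l.length => (⟨l.length - 1 - j, by simp; omega⟩ : Fin (complReverse l).length))
    (fun k => ⟨⟨l.length - 1 - k, by have := k.isLt; simp at this; omega⟩,
      Fin.ext (by have := k.isLt; simp at this ⊢; omega)⟩)
    (fun j => queryCost_complReverse hf_sym hl hθ j.isLt fun τ =>
      cost_complReverse hf_sym _ (fun x hx => hl x ((l.eraseIdx_sublist j).subset hx)) τ)).symm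
termination_by l.length
decreasing_by rw [List.length_eraseIdx_of_lt j.isLt]; omega

end Cost

theorem one_sub_mul_le_one_sub_mul {f : ℝ → ℝ} (hf1 : 0 ≤ f 1)
    (hf_sym : ∀ x ∈ Icc (0 : ℝ) 1, f x = f (1 - x))
    (hf_mono : AntitoneOn (fun x => f x / x) (Ioc (0 : ℝ) 1)) {x y : ℝ}
    (hx : x ∈ Icc (0 : ℝ) 1) (hy : y ∈ Icc (0 : ℝ) 1) (hxy : x ≤ y) :
    (1 - y) * f x ≤ (1 - x) * f y := by
  rcases hy.2.eq_or_lt with rfl | hy1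
  · simpa using mul_nonneg (sub_nonneg.mpr hx.2) hf1
  · have h : f (1 - x) / (1 - x) ≤ f (1 - y) / (1 - y) :=
      hf_mono ⟨by linarith, by linarith [hy.1]⟩ ⟨by linarith, by linarith [hx.1]⟩ (by linarith)
    rw [← hf_sym x hx, ← hf_sym y hy, div_le_div_iff₀ (by linarith) (by linarith)] at h
    linarith

/-- The inequality `S¹_{m,k,i} ≤ (1 - p_{k+1}) f(p_i) - (1 - p_i) f(p_{k+1})` of the paper,
with the 1-based positions `k + 1` and `i` turned into the 0-based indices `a` and `b`. -/
def ExchangeBound (f : ℝ → ℝ) (θ : ℕ) (l : List ℝ) (a b : ℕ) (ha : a < l.length)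
    (hb : b < l.length) : Prop :=
  (l[a] - l[b]) * cost f (θ - 1) ((l.eraseIdx b).eraseIdx a)
      + (1 - l[a]) * cost f θ (l.eraseIdx a) - (1 - l[b]) * cost f θ (l.eraseIdx b)
    ≤ (1 - l[a]) * f l[b] - (1 - l[b]) * f l[a]

section Exchange

variable {f : ℝ → ℝ} {θ : ℕ} {l : List ℝ}

theorem exchangeBound_zero_of_length_le (hf1 : 0 ≤ f 1)
    (hf_sym : ∀ x ∈ Icc (0 : ℝ) 1, f x = f (1 - x))
    (hf_mono : AntitoneOn (fun x => f x / x) (Ioc (0 : ℝ) 1)) (hl : SortedProbs l)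
    (hθ : l.length ≤ θ) {b : ℕ} (hb0 : 0 < b) (hb : b < l.length) :
    ExchangeBound f θ l 0 b (by omega) hb := by
  have hlen := List.length_eraseIdx_add_one hb
  have hlen₀ := List.length_eraseIdx_add_one (l := l) (i := 0) (by omega)
  have hlen₂ := List.length_eraseIdx_add_one (l := l.eraseIdx b) (i := 0) (by omega)
  rw [ExchangeBound, cost_of_length_lt (by omega), cost_of_length_lt (by omega),
    cost_of_length_lt (by omega)]
  have := one_sub_mul_le_one_sub_mul hf1 hf_sym hf_mono (hl.getElem_mem (by omega))
    (hl.getElem_mem hb) (hl.getElem_le (Nat.zero_le b) hb)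
  linarith

theorem exchangeBound_of_cost_eq_queryCost {a d : ℕ} (hθ : 1 ≤ θ) (hθl : θ < l.length)
    (had : a ≤ d) (hd : d + 1 < l.length) (ha1 : l[a] ≤ 1)
    (h : cost f θ (l.eraseIdx (d + 1))
      = queryCost f θ (l.eraseIdx (d + 1)) a (l.lt_length_eraseIdx _ (by omega))) :
    ExchangeBound f θ l a (d + 1) (by omega) hd := by
  have hq := cost_le_queryCost (f := f) hθ (by have := l.le_length_eraseIdx a; omega)
    (l.lt_length_eraseIdx a hd)
  simp only [queryCost] at h hq
  rw [List.getElem_eraseIdx_of_lt _ (by omega)] at h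
  rw [List.getElem_eraseIdx_of_ge _ had, ← List.eraseIdx_eraseIdx_of_le l had] at hq
  rw [ExchangeBound, h]
  linarith [mul_le_mul_of_nonneg_left hq (sub_nonneg.mpr ha1)]

theorem queryCost_le_of_exchangeBound {c d : ℕ} (hθ : 2 ≤ θ) (hθl : θ ≤ l.length)
    (hcd : c ≤ d) (hd : d + 1 < l.length) (hc0 : 0 ≤ l[c])
    (hE : ExchangeBound f θ l c (d + 1) (by omega) hd)
    (hA : cost f (θ - 1) (l.eraseIdx (d + 1))
      = queryCost f (θ - 1) (l.eraseIdx (d + 1)) c (l.lt_length_eraseIdx _ (by omega))) :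
    queryCost f θ l c (by omega) ≤ queryCost f θ l (d + 1) hd := by
  have hq := cost_le_queryCost (f := f) (θ := θ - 1) (by omega)
    (by have := l.le_length_eraseIdx c; omega) (l.lt_length_eraseIdx c hd)
  simp only [queryCost] at hA hq ⊢
  rw [List.getElem_eraseIdx_of_lt _ (by omega)] at hA
  rw [List.getElem_eraseIdx_of_ge _ hcd, ← List.eraseIdx_eraseIdx_of_le l hcd] at hq
  rw [ExchangeBound] at hE
  linarith [mul_le_mul_of_nonneg_left hq hc0, congrArg (l[d + 1] * ·) hA]

theorem exchangeBound_succ_succ {c d : ℕ} (hcd : c < d) (hd : d + 1 < l.length)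
    (hc : l[c] ∈ Icc (0 : ℝ) 1)
    (hB : ExchangeBound f θ (l.eraseIdx c) c d
      (l.lt_length_eraseIdx c (by omega)) (l.lt_length_eraseIdx c hd))
    (hW : ExchangeBound f (θ - 1) (l.eraseIdx c) c d
      (l.lt_length_eraseIdx c (by omega)) (l.lt_length_eraseIdx c hd))
    (e₁ : cost f θ (l.eraseIdx (c + 1))
      = queryCost f θ (l.eraseIdx (c + 1)) c (l.lt_length_eraseIdx _ (by omega)))
    (e₂ : cost f θ (l.eraseIdx (d + 1))
      = queryCost f θ (l.eraseIdx (d + 1)) c (l.lt_length_eraseIdx _ (by omega)))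
    (e₃ : cost f (θ - 1) ((l.eraseIdx (d + 1)).eraseIdx (c + 1))
      = queryCost f (θ - 1) ((l.eraseIdx (d + 1)).eraseIdx (c + 1)) c
        (List.lt_length_eraseIdx _ _ (l.lt_length_eraseIdx _ (by omega)))) :
    ExchangeBound f θ l (c + 1) (d + 1) (by omega) hd := by
  simp only [queryCost] at e₁ e₂ e₃
  simp only [ExchangeBound] at hB hW ⊢
  rw [List.getElem_eraseIdx_of_lt _ (by omega), List.eraseIdx_eraseIdx_of_le l le_rfl] at e₁
  rw [List.getElem_eraseIdx_of_lt _ (by omega), List.eraseIdx_eraseIdx_of_le l hcd.le] at e₂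
  rw [List.getElem_eraseIdx_of_lt _ (by omega), List.getElem_eraseIdx_of_lt _ (by omega),
    List.eraseIdx_eraseIdx_of_le (l.eraseIdx (d + 1)) le_rfl,
    List.eraseIdx_eraseIdx_of_le l hcd.le] at e₃
  rw [List.getElem_eraseIdx_of_ge _ le_rfl, List.getElem_eraseIdx_of_ge _ hcd.le] at hB hW
  rw [e₁, e₂, e₃]
  linarith [mul_le_mul_of_nonneg_left hW hc.1, mul_le_mul_of_nonneg_left hB (sub_nonneg.mpr hc.2)]

end Exchange

/-- On sorted lists of length `n`, the `θ`-th largest element (index `c = n - θ`) is an optimal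
first query. -/
def RankQueryOptimal (f : ℝ → ℝ) (n : ℕ) : Prop :=
  ∀ l, SortedProbs l → l.length = n → ∀ θ c (hc : c < l.length), 1 ≤ θ → θ + c = n →
    cost f θ l = queryCost f θ l c hc

def ExchangeBoundsHold (f : ℝ → ℝ) (n : ℕ) : Prop :=
  ∀ l, SortedProbs l → l.length = n → ∀ θ a b (ha : a < l.length) (hb : b < l.length),
    θ + a = n → a < b → ExchangeBound f θ l a b ha hb

section Induction

variable {f : ℝ → ℝ} {n : ℕ}

theorem ExchangeBoundsHold.succ_succ (hf1 : 0 ≤ f 1)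
    (hf_sym : ∀ x ∈ Icc (0 : ℝ) 1, f x = f (1 - x))
    (hf_mono : AntitoneOn (fun x => f x / x) (Ioc (0 : ℝ) 1))
    (hA : RankQueryOptimal f n) (hA' : RankQueryOptimal f (n + 1))
    (hB : ExchangeBoundsHold f (n + 1)) : ExchangeBoundsHold f (n + 2) := by
  intro l hl hlen θ a b ha hb hθa hab
  obtain ⟨d, rfl⟩ : ∃ d, b = d + 1 := ⟨b - 1, by omega⟩
  have hlen₁ (i : ℕ) (hi : i < l.length) : (l.eraseIdx i).length = n + 1 := by
    rw [List.length_eraseIdx_of_lt hi]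
    omega
  have hlen₂ (i j : ℕ) (hi : i < l.length) (hj : j < n + 1) :
      ((l.eraseIdx i).eraseIdx j).length = n := by
    rw [List.length_eraseIdx_of_lt (by rw [hlen₁ i hi]; omega), hlen₁ i hi]
    rfl
  rcases a with _ | c
  · exact exchangeBound_zero_of_length_le hf1 hf_sym hf_mono hl (by omega) (by omega) hb
  obtain ⟨d, rfl⟩ : ∃ d', d = d' + 1 := ⟨d - 1, by omega⟩
  have hl' := hl.eraseIdx c
  refine exchangeBound_succ_succ (by omega) hb (hl.getElem_mem _) ?_ ?_ ?_ ?_ ?_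
  · exact hB _ hl' (hlen₁ c (by omega)) _ _ _ _ _ (by omega) (by omega)
  · exact exchangeBound_of_cost_eq_queryCost (by omega) (by rw [hlen₁ c (by omega)]; omega)
      (by omega) _ (hl'.getElem_mem _).2
      (hA _ (hl'.eraseIdx _) (hlen₂ _ _ (by omega) (by omega)) _ _ _ (by omega) (by omega))
  · exact hA' _ (hl.eraseIdx _) (hlen₁ _ ha) _ _ _ (by omega) (by omega)
  · exact hA' _ (hl.eraseIdx _) (hlen₁ _ hb) _ _ _ (by omega) (by omega)
  · exact hA _ ((hl.eraseIdx _).eraseIdx _) (hlen₂ _ _ hb (by omega)) _ _ _ (by omega) (by omega)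

theorem RankQueryOptimal.queryCost_le_of_lt (hA : RankQueryOptimal f n)
    (hB : ExchangeBoundsHold f (n + 1)) {l : List ℝ} (hl : SortedProbs l)
    (hlen : l.length = n + 1) {θ c j : ℕ} (hθc : θ + c = n + 1) (hcj : c < j)
    (hj : j < l.length) :
    queryCost f θ l c (by omega) ≤ queryCost f θ l j hj := by
  obtain ⟨d, rfl⟩ : ∃ d, j = d + 1 := ⟨j - 1, by omega⟩
  have hlen' : (l.eraseIdx (d + 1)).length = n := by
    rw [List.length_eraseIdx_of_lt hj]
    omega
  exact queryCost_le_of_exchangeBound (by omega) (by omega) (by omega) hj (hl.getElem_mem _).1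
    (hB l hl hlen θ c (d + 1) _ hj hθc hcj)
    (hA _ (hl.eraseIdx _) hlen' _ _ _ (by omega) (by omega))

theorem RankQueryOptimal.succ (hf_sym : ∀ x ∈ Icc (0 : ℝ) 1, f x = f (1 - x))
    (hA : RankQueryOptimal f n) (hB : ExchangeBoundsHold f (n + 1)) :
    RankQueryOptimal f (n + 1) := by
  intro l hl hlen θ c hc hθ hθc
  refine cost_eq_queryCost_of_forall_le hθ (by omega) hc fun j hj => ?_
  rcases lt_trichotomy c j with hcj | rfl | hjc
  · exact hA.queryCost_le_of_lt hB hl hlen hθc hcj hj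
  · rfl
  · have hdual (i : ℕ) (hi : i < l.length) :
        queryCost f (l.length + 1 - θ) (complReverse l) (l.length - 1 - i) (by simp; omega)
          = queryCost f θ l i hi := by
      rw [queryCost_complReverse hf_sym hl.2 (by omega) hi
          fun τ => cost_complReverse hf_sym _ (hl.eraseIdx i).2 τ,
        show l.length + 1 - (l.length + 1 - θ) = θ by omega]
    rw [← hdual c hc, ← hdual j hj]
    exact hA.queryCost_le_of_lt hB hl.complReverse (by simpa using hlen) (by omega) (by omega) _

theorem rankQueryOptimal_and_exchangeBoundsHold (hf1 : 0 ≤ f 1)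
    (hf_sym : ∀ x ∈ Icc (0 : ℝ) 1, f x = f (1 - x))
    (hf_mono : AntitoneOn (fun x => f x / x) (Ioc (0 : ℝ) 1)) :
    ∀ n, RankQueryOptimal f n ∧ ExchangeBoundsHold f n
  | 0 => ⟨fun _ _ _ _ _ _ _ _ => by omega, fun _ _ hlen _ _ _ _ hb _ _ => by omega⟩
  | 1 =>
    have hB : ExchangeBoundsHold f 1 := fun _ _ hlen _ _ _ _ hb _ hab => by omega
    ⟨(rankQueryOptimal_and_exchangeBoundsHold hf1 hf_sym hf_mono 0).1.succ hf_sym hB, hB⟩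
  | n + 2 =>
    have hA := (rankQueryOptimal_and_exchangeBoundsHold hf1 hf_sym hf_mono n).1
    have ⟨hA', hB'⟩ := rankQueryOptimal_and_exchangeBoundsHold hf1 hf_sym hf_mono (n + 1)
    have hB := hB'.succ_succ hf1 hf_sym hf_mono hA hA'
    ⟨hA'.succ hf_sym hB, hB⟩

end Induction

/-- Part (b) of the loaded induction hypothesis in Lemma 1:
the quantity `S¹_{m,k,i}` is bounded by `(1-p_{k+1}) f(p_i) - (1-p_i) f(p_{k+1})`
for `0 ≤ k ≤ m-2` and `k+2 ≤ i ≤ m` (1-based indices). -/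
theorem stmt_1 (f : ℝ → ℝ)
    (hf_nonneg : ∀ x ∈ Set.Icc (0:ℝ) 1, 0 ≤ f x)
    (hf_sym : ∀ x ∈ Set.Icc (0:ℝ) 1, f x = f (1 - x))
    (hf_mono : AntitoneOn (fun x => f x / x) (Set.Ioc (0:ℝ) 1))
    (m : ℕ) (p : Fin m → ℝ)
    (hp0 : ∀ i, 0 ≤ p i) (hp1 : ∀ i, p i ≤ 1) (hsorted : Monotone p)
    (k i : ℕ) (hk : k + 2 ≤ m) (hki : k + 2 ≤ i) (him : i ≤ m) :
    (p ⟨k, by omega⟩ - p ⟨i - 1, by omega⟩) *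
        cost f (m - k - 1) (((List.ofFn p).eraseIdx (i - 1)).eraseIdx k)
      + (1 - p ⟨k, by omega⟩) * cost f (m - k) ((List.ofFn p).eraseIdx k)
      - (1 - p ⟨i - 1, by omega⟩) * cost f (m - k) ((List.ofFn p).eraseIdx (i - 1))
    ≤ (1 - p ⟨k, by omega⟩) * f (p ⟨i - 1, by omega⟩)
      - (1 - p ⟨i - 1, by omega⟩) * f (p ⟨k, by omega⟩) := by
  have hp : SortedProbs (List.ofFn p) := by
    refine ⟨List.pairwise_ofFn.mpr fun a b hab => hsorted hab.le, ?_⟩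
    simp only [List.mem_ofFn]
    rintro _ ⟨j, rfl⟩
    exact ⟨hp0 j, hp1 j⟩
  have hB := (rankQueryOptimal_and_exchangeBoundsHold (hf_nonneg 1 ⟨zero_le_one, le_rfl⟩)
    hf_sym hf_mono m).2
  have h := hB (List.ofFn p) hp List.length_ofFn (m - k) k (i - 1)
    (by simp; omega) (by simp; omega) (by omega) (by omega)
  simp only [ExchangeBound, List.getElem_ofFn] at h
  exact h
end

section
/- Let n ≥ 1, N ≥ 1, and let E be the set of all n×N matrices M with entries in {0,1} such that every column of M has column sum equal to n−1 or n. Then E is a fooling set for the columnwise extension of the n-variable AND function (AND of a column equals 1 iff all n entries are 1), and |E| = (n+1)^N. -/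
/-!
Every admissible column is either all ones or has a single zero, so it is determined by the
position of its zero (an element of `Option (Fin n)`); this gives `(n + 1) ^ N` matrices. If two
distinct such matrices have the same AND-values, they differ in a column `j` where both have a
single zero, at distinct rows `a ≠ b`. Copying row `b` of the first matrix into the second turns
column `j` of the second into the all-ones column, which changes its AND-value.
-/

/-- Replace the `i`-th row of the matrix `M1` by the `i`-th row of `M2`. -/
def replaceRow {n N : ℕ} {α : Type*} (M1 M2 : Fin n → Fin N → α) (i : Fin n) :
    Fin n → Fin N → α :=
  fun r => if r = i then M2 r else M1 r

/-- The columnwise extension `g^N` of a function `g` on columns: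
apply `g` to each of the `N` columns of the matrix `M`. -/
def colApply {n N : ℕ} {α β : Type*} (g : (Fin n → α) → β) (M : Fin n → Fin N → α) :
    Fin N → β :=
  fun j => g (fun i => M i j)

/-- `E` is a fooling set for the columnwise extension `g^N` of `g`: for all distinct
`M1, M2 ∈ E`, either `g^N(M1) ≠ g^N(M2)`, or replacing some row of `M1` by the
corresponding row of `M2` (or vice versa) changes the `g^N`-value. -/
def IsFoolingSet {n N : ℕ} {α β : Type*} (g : (Fin n → α) → β)
    (E : Set (Fin n → Fin N → α)) : Prop :=
  ∀ M1 ∈ E, ∀ M2 ∈ E, M1 ≠ M2 →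
    colApply g M1 ≠ colApply g M2 ∨
    (∃ i, colApply g (replaceRow M1 M2 i) ≠ colApply g M1) ∨
    (∃ i, colApply g (replaceRow M2 M1 i) ≠ colApply g M2)

open Finset

section OnesExcept

variable {ι : Type*} [DecidableEq ι]

def onesExcept (a : Option ι) (i : ι) : ℕ := if a = some i then 0 else 1

lemma onesExcept_le_one (a : Option ι) (i : ι) : onesExcept a i ≤ 1 := by
  unfold onesExcept; split <;> omega

@[simp]
lemma onesExcept_some_self (a : ι) : onesExcept (some a) a = 0 := by
  simp [onesExcept]

lemma onesExcept_some_of_ne {a i : ι} (h : a ≠ i) : onesExcept (some a) i = 1 := by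
  simp [onesExcept, h]

@[simp]
lemma onesExcept_none (i : ι) : onesExcept none i = 1 := by
  simp [onesExcept]

lemma update_onesExcept_some_self (a : ι) :
    Function.update (onesExcept (some a)) a 1 = onesExcept none :=
  funext fun i => by
    by_cases hi : i = a
    · simp [hi]
    · simp [hi, onesExcept_some_of_ne (Ne.symm hi)]

lemma forall_onesExcept_eq_one_iff {a : Option ι} : (∀ i, onesExcept a i = 1) ↔ a = none := by
  cases a with
  | none => simp
  | some a => simpa only [reduceCtorEq, iff_false, not_forall] using ⟨a, by simp⟩

lemma onesExcept_injective : Function.Injective (onesExcept : Option ι → ι → ℕ) := by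
  intro a b h
  cases a with
  | none => exact (forall_onesExcept_eq_one_iff.mp fun i => by simp [← h]).symm
  | some a =>
    have hb : onesExcept b a = 0 := by simp [← h]
    unfold onesExcept at hb
    split_ifs at hb with hba
    exact hba.symm

variable [Fintype ι]

lemma sum_onesExcept_some (a : ι) : ∑ i, onesExcept (some a) i = Fintype.card ι - 1 := by
  rw [← add_sum_erase _ _ (mem_univ a), onesExcept_some_self, zero_add,
    sum_congr rfl fun i hi => onesExcept_some_of_ne (ne_of_mem_erase hi).symm]
  simp [card_erase_of_mem]

lemma mem_range_onesExcept_iff {c : ι → ℕ} :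
    c ∈ Set.range onesExcept ↔
      (∀ i, c i ≤ 1) ∧ (∑ i, c i = Fintype.card ι - 1 ∨ ∑ i, c i = Fintype.card ι) := by
  constructor
  · rintro ⟨a, rfl⟩
    refine ⟨onesExcept_le_one a, ?_⟩
    cases a with
    | none => simp
    | some a => exact Or.inl (sum_onesExcept_some a)
  · rintro ⟨hle, hsum⟩
    by_cases hones : ∀ i, c i = 1
    · exact ⟨none, funext fun i => by simp [hones i]⟩
    obtain ⟨a, ha⟩ : ∃ a, c a = 0 := by
      push Not at hones
      obtain ⟨a, ha⟩ := hones
      exact ⟨a, by have := hle a; omega⟩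
    have hle' : ∀ i ∈ univ, c i ≤ onesExcept (some a) i := fun i _ => by
      by_cases hi : a = i
      · simp [← hi, ha]
      · simpa [onesExcept_some_of_ne hi] using hle i
    have hsum_eq : ∑ i, c i = ∑ i, onesExcept (some a) i := by
      have := sum_le_sum hle'
      rw [sum_onesExcept_some] at this ⊢
      omega
    exact ⟨some a, funext fun i => ((sum_eq_sum_iff_of_le hle').mp hsum_eq i (mem_univ i)).symm⟩

end OnesExcept

section AndColumns

variable {n N : ℕ}

def andCol (x : Fin n → ℕ) : ℕ := if ∀ i, x i = 1 then 1 else 0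

lemma andCol_onesExcept (a : Option (Fin n)) :
    andCol (onesExcept a) = if a = none then 1 else 0 := by
  simp only [andCol, forall_onesExcept_eq_one_iff]

def onesExceptMatrix (c : Fin N → Option (Fin n)) : Fin n → Fin N → ℕ :=
  fun i j => onesExcept (c j) i

lemma onesExceptMatrix_injective :
    Function.Injective (onesExceptMatrix : (Fin N → Option (Fin n)) → Fin n → Fin N → ℕ) :=
  fun _ _ h => funext fun j => onesExcept_injective <| funext fun i => congrFun (congrFun h i) j

lemma setOf_columns_eq_range_onesExceptMatrix :
    {M : Fin n → Fin N → ℕ | (∀ i j, M i j ≤ 1) ∧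
        ∀ j, (∑ i, M i j = n - 1 ∨ ∑ i, M i j = n)} = Set.range onesExceptMatrix := by
  ext M
  have hcol : ∀ j, (fun i => M i j) ∈ Set.range onesExcept ↔
      (∀ i, M i j ≤ 1) ∧ (∑ i, M i j = n - 1 ∨ ∑ i, M i j = n) := fun j => by
    simpa using mem_range_onesExcept_iff (c := fun i => M i j)
  simp only [Set.mem_ofPred_eq, Set.mem_range, forall_comm (α := Fin n), ← forall_and, ← hcol,
    Classical.skolem, funext_iff, onesExceptMatrix]

lemma colApply_replaceRow (g : (Fin n → ℕ) → ℕ) (M1 M2 : Fin n → Fin N → ℕ) (i : Fin n)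
    (j : Fin N) :
    colApply g (replaceRow M1 M2 i) j = g (Function.update (fun r => M1 r j) i (M2 i j)) := by
  simp only [colApply, replaceRow]
  congr 1
  funext r
  split_ifs with h <;> simp [h]

theorem isFoolingSet_andCol_range_onesExceptMatrix :
    IsFoolingSet andCol (Set.range (onesExceptMatrix : (Fin N → Option (Fin n)) → _)) := by
  rintro _ ⟨c₁, rfl⟩ _ ⟨c₂, rfl⟩ hne
  by_cases hg : colApply andCol (onesExceptMatrix c₁) = colApply andCol (onesExceptMatrix c₂)
  swap
  · exact Or.inl hg
  obtain ⟨j, hj⟩ : ∃ j, c₁ j ≠ c₂ j :=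
    Function.ne_iff.mp fun h => hne (congrArg onesExceptMatrix h)
  have hgj := congrFun hg j
  simp only [colApply, onesExceptMatrix, andCol_onesExcept] at hgj
  rcases h₁ : c₁ j with _ | a <;> rcases h₂ : c₂ j with _ | b
  · exact absurd (h₁.trans h₂.symm) hj
  · simp [h₁, h₂] at hgj
  · simp [h₁, h₂] at hgj
  have hab : a ≠ b := fun h => hj (by rw [h₁, h₂, h])
  refine Or.inr (Or.inr ⟨b, Function.ne_iff.mpr ⟨j, ?_⟩⟩)
  rw [colApply_replaceRow]
  simp only [onesExceptMatrix, colApply, h₁, h₂, onesExcept_some_of_ne hab,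
    update_onesExcept_some_self, andCol_onesExcept]
  simp

end AndColumns

theorem stmt_9_general (n N : ℕ) :
    IsFoolingSet (fun x : Fin n → ℕ => if ∀ i, x i = 1 then 1 else 0)
      {M : Fin n → Fin N → ℕ | (∀ i j, M i j ≤ 1) ∧
        ∀ j, (∑ i, M i j = n - 1 ∨ ∑ i, M i j = n)} ∧
    Set.ncard {M : Fin n → Fin N → ℕ | (∀ i j, M i j ≤ 1) ∧
        ∀ j, (∑ i, M i j = n - 1 ∨ ∑ i, M i j = n)} = (n + 1) ^ N := by
  rw [setOf_columns_eq_range_onesExceptMatrix,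
    Set.ncard_range_of_injective onesExceptMatrix_injective]
  exact ⟨isFoolingSet_andCol_range_onesExceptMatrix, by simp⟩

/-- The set of Boolean (0/1-entry) `n × N` matrices all of whose columns sum to
`n - 1` or `n` is a fooling set for the columnwise extension of the `n`-variable
AND function, and has cardinality `(n+1)^N`. -/
theorem stmt_9 (n N : ℕ) (hn : 1 ≤ n) (hN : 1 ≤ N) :
    IsFoolingSet (fun x : Fin n → ℕ => if ∀ i, x i = 1 then 1 else 0)
      {M : Fin n → Fin N → ℕ | (∀ i j, M i j ≤ 1) ∧
        ∀ j, (∑ i, M i j = n - 1 ∨ ∑ i, M i j = n)} ∧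
    Set.ncard {M : Fin n → Fin N → ℕ | (∀ i j, M i j ≤ 1) ∧
        ∀ j, (∑ i, M i j = n - 1 ∨ ∑ i, M i j = n)} = (n + 1) ^ N :=
  stmt_9_general n N
end

section
/- Let n ≥ 1, N ≥ 1 and 1 ≤ θ ≤ n. Let E be the set of all n×N matrices M with entries in {0,1} such that every column of M has column sum equal to θ−1 or θ. Then E is a fooling set for the columnwise extension of the Boolean threshold function Π_θ (where Π_θ of a column equals 1 iff the column sum is at least θ), and |E| = (C(n,θ−1) + C(n,θ))^N = C(n+1,θ)^N, where C(·,·) denotes the binomial coefficient. -/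
lemma sum_replace {n N : ℕ} (M1 M2 : Fin n → Fin N → ℕ) (i : Fin n) (j : Fin N) :
    (∑ r, replaceRow M1 M2 i r j) + M1 i j = (∑ r, M1 r j) + M2 i j := by
  rw [← Finset.add_sum_erase _ (fun r => replaceRow M1 M2 i r j) (Finset.mem_univ i),
      ← Finset.add_sum_erase _ (fun r => M1 r j) (Finset.mem_univ i)]
  have h1 : replaceRow M1 M2 i i j = M2 i j := by simp [replaceRow]
  have h2 : ∀ r ∈ Finset.univ.erase i, replaceRow M1 M2 i r j = M1 r j := by
    intro r hr
    simp [replaceRow, Finset.ne_of_mem_erase hr]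
  rw [h1, Finset.sum_congr rfl h2]
  ring

lemma sum_eq_card_filter {n : ℕ} (x : Fin n → ℕ) (h : ∀ i, x i ≤ 1) :
    ∑ i, x i = (Finset.univ.filter (fun i => x i = 1)).card := by
  rw [Finset.card_filter]
  apply Finset.sum_congr rfl
  intro i _
  have := h i
  split_ifs with hx <;> omega

/-- The set of Boolean (0/1-entry) `n × N` matrices all of whose columns sum to
`θ - 1` or `θ` is a fooling set for the columnwise extension of the Boolean
threshold function `Π_θ`, and has cardinality
`(C(n,θ-1) + C(n,θ))^N = C(n+1,θ)^N`. -/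
theorem stmt_10 (n N θ : ℕ) (hn : 1 ≤ n) (hN : 1 ≤ N) (hθ1 : 1 ≤ θ) (hθn : θ ≤ n) :
    IsFoolingSet (fun x : Fin n → ℕ => if θ ≤ ∑ i, x i then 1 else 0)
      {M : Fin n → Fin N → ℕ | (∀ i j, M i j ≤ 1) ∧
        ∀ j, (∑ i, M i j = θ - 1 ∨ ∑ i, M i j = θ)} ∧
    Set.ncard {M : Fin n → Fin N → ℕ | (∀ i j, M i j ≤ 1) ∧
        ∀ j, (∑ i, M i j = θ - 1 ∨ ∑ i, M i j = θ)}
      = (n.choose (θ - 1) + n.choose θ) ^ N ∧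
    (n.choose (θ - 1) + n.choose θ) ^ N = ((n + 1).choose θ) ^ N := by
  refine ⟨?_, ?_, ?_⟩
  · -- fooling set
    intro M1 h1 M2 h2 hne
    by_cases hg : colApply (fun x : Fin n → ℕ => if θ ≤ ∑ i, x i then 1 else 0) M1 =
        colApply (fun x : Fin n → ℕ => if θ ≤ ∑ i, x i then 1 else 0) M2
    swap
    · exact Or.inl hg
    right
    have hex : ∃ i j, M1 i j ≠ M2 i j := by
      by_contra h
      push_neg at h
      exact hne (funext fun i => funext fun j => h i j)
    obtain ⟨i, j, hij⟩ := hex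
    have ha := h1.1 i j
    have hb := h2.1 i j
    have hs1 := h1.2 j
    have hs2 := h2.2 j
    have hgj := congrFun hg j
    simp only [colApply] at hgj
    have hseq : ∑ r, M1 r j = ∑ r, M2 r j := by
      split_ifs at hgj <;> omega
    have hsum1 := sum_replace M1 M2 i j
    have hsum2 := sum_replace M2 M1 i j
    by_cases hθs : θ ≤ ∑ r, M1 r j
    · -- both column sums equal θ
      by_cases ha0 : M1 i j = 0
      · -- M2 i j = 1; replacing row i of M2 drops the sum to θ - 1
        right
        refine ⟨i, fun h => ?_⟩
        have hc := congrFun h j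
        simp only [colApply] at hc
        split_ifs at hc <;> omega
      · left
        refine ⟨i, fun h => ?_⟩
        have hc := congrFun h j
        simp only [colApply] at hc
        split_ifs at hc <;> omega
    · -- both column sums equal θ - 1
      by_cases ha0 : M1 i j = 0
      · -- M2 i j = 1; replacing row i of M1 raises the sum to θ
        left
        refine ⟨i, fun h => ?_⟩
        have hc := congrFun h j
        simp only [colApply] at hc
        split_ifs at hc <;> omega
      · right
        refine ⟨i, fun h => ?_⟩
        have hc := congrFun h j
        simp only [colApply] at hc
        split_ifs at hc <;> omega
  · -- cardinality
    set E : Set (Fin n → Fin N → ℕ) :=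
      {M : Fin n → Fin N → ℕ | (∀ i j, M i j ≤ 1) ∧
        ∀ j, (∑ i, M i j = θ - 1 ∨ ∑ i, M i j = θ)} with hE
    have e : E ≃ (Fin N → {s : Finset (Fin n) // s.card = θ - 1 ∨ s.card = θ}) := by
      refine
        { toFun := fun M j => ⟨Finset.univ.filter (fun i => (M : Fin n → Fin N → ℕ) i j = 1), ?_⟩
          invFun := fun f => ⟨fun i j => if i ∈ (f j : Finset (Fin n)) then 1 else 0, ?_, ?_⟩
          left_inv := ?_
          right_inv := ?_ }
      · rw [← sum_eq_card_filter _ (fun i => M.2.1 i j)]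
        exact M.2.2 j
      · intro i j
        dsimp only
        split_ifs <;> omega
      · intro j
        have : (∑ i, if i ∈ (f j : Finset (Fin n)) then 1 else 0) = (f j : Finset (Fin n)).card := by
          simp [Finset.sum_ite_mem]
        rw [this]
        exact (f j).2
      · intro M
        ext i j
        have := M.2.1 i j
        simp only [Finset.mem_filter, Finset.mem_univ, true_and]
        split_ifs with hx <;> omega
      · intro f
        funext j
        ext i
        simp
    have hT : Fintype.card {s : Finset (Fin n) // s.card = θ - 1 ∨ s.card = θ}
        = n.choose (θ - 1) + n.choose θ := by
      rw [Fintype.card_subtype, Finset.filter_or, Finset.card_union_of_disjoint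
        (Finset.disjoint_filter.mpr fun s _ h h' => by omega),
        ← Fintype.card_subtype, ← Fintype.card_subtype,
        Fintype.card_finset_len, Fintype.card_finset_len, Fintype.card_fin]
    calc Set.ncard E = Nat.card E := (Nat.card_coe_set_eq E).symm
      _ = Nat.card (Fin N → {s : Finset (Fin n) // s.card = θ - 1 ∨ s.card = θ}) :=
        Nat.card_congr e
      _ = (n.choose (θ - 1) + n.choose θ) ^ N := by
        rw [Nat.card_eq_fintype_card, Fintype.card_fun, hT, Fintype.card_fin]
  · obtain ⟨k, rfl⟩ : ∃ k, θ = k + 1 := ⟨θ - 1, by omega⟩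
    simp [Nat.choose_succ_succ]
end
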